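/- Let 3/2 < β ≤ 2. Then there exists a constant C > 0 such that for every real Λ ≥ 2 and every p ∈ ℤ² with 1+|p|² ≤ Λ², ∑_{r ∈ ℤ², 1+|r|² > Λ²} (1+|r−p|²)^{−β/2} (1+|r|²)^{−1} ≤ C · (1+log Λ) · Λ^{−β}. -/

import Mathlib

open scoped ENNReal

noncomputable def nsq (p : ℤ × ℤ) : ℝ := (p.1 : ℝ) ^ 2 + (p.2 : ℝ) ^ 2

/-!
Split the sum according to whether `1 + |r|² ≤ 4 (1 + |r - p|²)`. There the Bessel factor is at
most `2^β (1 + |r|²)^(-β/2)`, and the lattice tail `∑_{1+|r|² > Λ²} (1 + |r|²)^(-(β/2+1))` is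
`O(Λ^(-β))`. Otherwise `1 + |r - p|² < 1 + |p|² ≤ Λ²` while `(1 + |r|²)⁻¹ < Λ⁻²`; as `β ≤ 2`,
`(1 + |s|²)^(-β/2) ≤ Λ^(2-β) (1 + |s|²)⁻¹` on that ball, and `∑_{1+|s|² ≤ Λ²} (1 + |s|²)⁻¹` is
`O(1 + log Λ)`. Both lattice sums are computed shell by shell, the shell `max(|r₁|, |r₂|) = n`
having `8n` points, which leaves a `p`-series tail (integral test) and a harmonic sum.
-/

open Finset

lemma nsq_nonneg (p : ℤ × ℤ) : 0 ≤ nsq p := by unfold nsq; positivity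

lemma nsq_add_le (a b : ℤ × ℤ) : nsq (a + b) ≤ 2 * nsq a + 2 * nsq b := by
  simp only [nsq, Prod.fst_add, Prod.snd_add, Int.cast_add]
  nlinarith [sq_nonneg ((a.1 : ℝ) - b.1), sq_nonneg ((a.2 : ℝ) - b.2)]

lemma sq_le_nsq_of_mem_box {n : ℕ} {r : ℤ × ℤ} (hr : r ∈ (box n : Finset (ℤ × ℤ))) :
    (n : ℝ) ^ 2 ≤ nsq r := by
  rw [Int.mem_box] at hr
  subst hr
  rcases max_choice r.1.natAbs r.2.natAbs with h | h <;>
    simp only [h, nsq, Nat.cast_natAbs, Int.cast_abs, sq_abs] <;> nlinarith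

lemma nsq_le_two_mul_sq_of_mem_box {n : ℕ} {r : ℤ × ℤ} (hr : r ∈ (box n : Finset (ℤ × ℤ))) :
    nsq r ≤ 2 * (n : ℝ) ^ 2 := by
  rw [Int.mem_box] at hr
  have h1 : ((r.1.natAbs : ℕ) : ℝ) ≤ n := by rw [← hr]; exact_mod_cast le_max_left _ _
  have h2 : ((r.2.natAbs : ℕ) : ℝ) ≤ n := by rw [← hr]; exact_mod_cast le_max_right _ _
  rw [Nat.cast_natAbs, Int.cast_abs] at h1 h2
  unfold nsq
  nlinarith [sq_le_sq' (abs_le.1 h1).1 (abs_le.1 h1).2, sq_le_sq' (abs_le.1 h2).1 (abs_le.1 h2).2]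

lemma card_box_le (n : ℕ) : #(box n : Finset (ℤ × ℤ)) ≤ 8 * n + 1 := by
  rcases Nat.eq_zero_or_pos n with rfl | hn
  · simp
  · rw [Int.card_box hn.ne']; omega

lemma tsum_eq_tsum_sum_box (F : ℤ × ℤ → ℝ≥0∞) :
    ∑' r, F r = ∑' n : ℕ, ∑ r ∈ box n, F r := by
  rw [← ENNReal.tsum_fiberwise F (fun r => max r.1.natAbs r.2.natAbs)]
  congr 1 with n
  have : (fun r : ℤ × ℤ => max r.1.natAbs r.2.natAbs) ⁻¹' {n} = (box n : Finset (ℤ × ℤ)) := by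
    ext; simp
  rw [this, Finset.tsum_subtype']

lemma sum_box_ofReal_rpow_le {γ : ℝ} (hγ : 0 ≤ γ) {n : ℕ} (hn : 0 < n) :
    ∑ r ∈ box n, ENNReal.ofReal ((1 + nsq r) ^ (-γ)) ≤
      ENNReal.ofReal (8 * (n : ℝ) ^ (1 - 2 * γ)) := by
  have hn' : (0 : ℝ) < n := by exact_mod_cast hn
  have hterm : ∀ r ∈ box n,
      ENNReal.ofReal ((1 + nsq r) ^ (-γ)) ≤ ENNReal.ofReal (((n : ℝ) ^ 2) ^ (-γ)) :=
    fun r hr => ENNReal.ofReal_le_ofReal <| Real.rpow_le_rpow_of_nonpos (by positivity)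
      (by linarith [sq_le_nsq_of_mem_box hr]) (by linarith)
  calc _ ≤ #(box n) • ENNReal.ofReal (((n : ℝ) ^ 2) ^ (-γ)) := sum_le_card_nsmul _ _ _ hterm
    _ = ENNReal.ofReal (8 * (n : ℝ) ^ (1 - 2 * γ)) := by
      rw [Int.card_box hn.ne', nsmul_eq_mul, ← ENNReal.ofReal_natCast,
        ← ENNReal.ofReal_mul (by positivity), ← Real.rpow_natCast, ← Real.rpow_mul hn'.le,
        sub_eq_add_neg, Real.rpow_add hn', Real.rpow_one]
      push_cast
      ring_nf

lemma sum_box_ofReal_inv_le (n : ℕ) :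
    ∑ r ∈ box n, ENNReal.ofReal (1 + nsq r)⁻¹ ≤ ENNReal.ofReal (16 * ((n + 1 : ℕ) : ℝ)⁻¹) := by
  have hterm : ∀ r ∈ box n, ENNReal.ofReal (1 + nsq r)⁻¹ ≤ ENNReal.ofReal (1 + (n : ℝ) ^ 2)⁻¹ :=
    fun r hr => ENNReal.ofReal_le_ofReal <|
      inv_anti₀ (by positivity) (by linarith [sq_le_nsq_of_mem_box hr])
  calc _ ≤ #(box n) • ENNReal.ofReal (1 + (n : ℝ) ^ 2)⁻¹ := sum_le_card_nsmul _ _ _ hterm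
    _ = ENNReal.ofReal (#(box n) * (1 + (n : ℝ) ^ 2)⁻¹) := by
      rw [nsmul_eq_mul, ← ENNReal.ofReal_natCast, ← ENNReal.ofReal_mul (by positivity)]
    _ ≤ ENNReal.ofReal (16 * ((n + 1 : ℕ) : ℝ)⁻¹) := by
      refine ENNReal.ofReal_le_ofReal ?_
      have : (#(box n : Finset (ℤ × ℤ)) : ℝ) ≤ 8 * n + 1 := by exact_mod_cast card_box_le n
      rw [← div_eq_mul_inv, ← div_eq_mul_inv, div_le_div_iff₀ (by positivity) (by positivity)]
      push_cast
      nlinarith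

lemma tsum_ofReal_rpow_nat_add_le {q : ℝ} (hq : 1 < q) {N : ℕ} (hN : 0 < N) :
    ∑' m : ℕ, ENNReal.ofReal (((m + N + 1 : ℕ) : ℝ) ^ (-q)) ≤
      ENNReal.ofReal ((N : ℝ) ^ (1 - q) / (q - 1)) := by
  have hN' : (0 : ℝ) < N := by exact_mod_cast hN
  have hsum : Summable fun m : ℕ => ((m + N + 1 : ℕ) : ℝ) ^ (-q) := by
    have := (Real.summable_nat_rpow.2 (neg_lt_neg_iff.2 hq)).comp_injective
      (add_left_injective (N + 1))
    simpa [Function.comp_def, add_assoc] using this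
  rw [← ENNReal.ofReal_tsum_of_nonneg (fun _ => by positivity) hsum]
  refine ENNReal.ofReal_le_ofReal ?_
  have anti : AntitoneOn (fun t : ℝ => t ^ (-q)) (Set.Ici (N : ℝ)) := fun x hx y _ hxy =>
    Real.rpow_le_rpow_of_nonpos (hN'.trans_le hx) hxy (by linarith)
  calc ∑' m : ℕ, ((m + N + 1 : ℕ) : ℝ) ^ (-q)
      ≤ ∫ t in Set.Ioi (N : ℝ), t ^ (-q) :=
        anti.tsum_comp_add_le_integral N (integrableOn_Ioi_rpow_of_lt (by linarith) hN')
          (fun t ht => Real.rpow_nonneg (hN'.le.trans (le_of_lt ht)) _)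
    _ = (N : ℝ) ^ (1 - q) / (q - 1) := by
        rw [integral_Ioi_rpow_of_lt (by linarith) hN', neg_div, ← div_neg, neg_add', neg_neg,
          add_comm, ← sub_eq_add_neg]

lemma floor_half_rpow_le {Λ s : ℝ} (hΛ : 2 ≤ Λ) (hs : s ≤ 0) :
    (⌊Λ / 2⌋₊ : ℝ) ^ s ≤ 4 ^ (-s) * Λ ^ s := by
  have hN : Λ / 4 ≤ ⌊Λ / 2⌋₊ := by
    have := Nat.lt_floor_add_one (Λ / 2)
    have : (1 : ℝ) ≤ ⌊Λ / 2⌋₊ := by exact_mod_cast Nat.floor_pos.2 (by linarith)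
    linarith
  calc (⌊Λ / 2⌋₊ : ℝ) ^ s ≤ (Λ / 4) ^ s :=
        Real.rpow_le_rpow_of_nonpos (by positivity) hN hs
    _ = 4 ^ (-s) * Λ ^ s := by
        rw [Real.div_rpow (by linarith) (by norm_num), div_eq_mul_inv,
          ← Real.rpow_neg (by norm_num), mul_comm]

lemma exists_tsum_tail_rpow_le {γ : ℝ} (hγ : 1 < γ) :
    ∃ C : ℝ, 0 < C ∧ ∀ Λ : ℝ, 2 ≤ Λ →
      ∑' r : {r : ℤ × ℤ // Λ ^ 2 < 1 + nsq r}, ENNReal.ofReal ((1 + nsq r) ^ (-γ)) ≤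
        ENNReal.ofReal (C * Λ ^ (2 - 2 * γ)) := by
  set q := 2 * γ - 1 with hq_def
  have hq : 0 < q - 1 := by linarith
  refine ⟨8 * 4 ^ (q - 1) / (q - 1), by positivity, fun Λ hΛ => ?_⟩
  set T := {r : ℤ × ℤ | Λ ^ 2 < 1 + nsq r}
  set F := fun r : ℤ × ℤ => ENNReal.ofReal ((1 + nsq r) ^ (-γ))
  set N := ⌊Λ / 2⌋₊
  have hN : 0 < N := Nat.floor_pos.2 (by linarith)
  have inner_vanish : ∀ n ∈ range (N + 1), ∑ r ∈ box n, T.indicator F r = 0 := by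
    intro n hn
    refine sum_eq_zero fun r hr => Set.indicator_of_notMem (fun hrT => ?_) _
    have hnN : (n : ℝ) ≤ Λ / 2 :=
      (Nat.cast_le.2 (Nat.lt_succ_iff.1 (mem_range.1 hn))).trans (Nat.floor_le (by linarith))
    have := nsq_le_two_mul_sq_of_mem_box hr
    have : (n : ℝ) ^ 2 ≤ (Λ / 2) ^ 2 := pow_le_pow_left₀ (by positivity) hnN 2
    simp only [T, Set.mem_ofPred_eq] at hrT
    nlinarith
  have inner_le (m : ℕ) : ∑ r ∈ box (m + (N + 1)), T.indicator F r ≤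
      ENNReal.ofReal 8 * ENNReal.ofReal (((m + N + 1 : ℕ) : ℝ) ^ (-q)) := by
    rw [← ENNReal.ofReal_mul (by norm_num), hq_def, neg_sub, ← add_assoc]
    exact (sum_le_sum fun r _ => Set.indicator_le_self T F r).trans
      (sum_box_ofReal_rpow_le (by linarith) (by omega))
  calc ∑' r : T, F r = ∑' r, T.indicator F r := tsum_subtype T F
    _ = ∑' n : ℕ, ∑ r ∈ box n, T.indicator F r := tsum_eq_tsum_sum_box _
    _ = ∑' m : ℕ, ∑ r ∈ box (m + (N + 1)), T.indicator F r := by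
        rw [← ENNReal.summable.sum_add_tsum_nat_add', sum_eq_zero inner_vanish, zero_add]
    _ ≤ ENNReal.ofReal 8 * ∑' m : ℕ, ENNReal.ofReal (((m + N + 1 : ℕ) : ℝ) ^ (-q)) := by
        rw [← ENNReal.tsum_mul_left]
        exact ENNReal.tsum_le_tsum inner_le
    _ ≤ ENNReal.ofReal 8 * ENNReal.ofReal ((N : ℝ) ^ (1 - q) / (q - 1)) := by
        gcongr
        exact tsum_ofReal_rpow_nat_add_le (by linarith) hN
    _ ≤ ENNReal.ofReal (8 * 4 ^ (q - 1) / (q - 1) * Λ ^ (2 - 2 * γ)) := by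
        rw [← ENNReal.ofReal_mul (by norm_num), show 2 - 2 * γ = 1 - q by ring]
        refine ENNReal.ofReal_le_ofReal ?_
        have : (N : ℝ) ^ (1 - q) ≤ 4 ^ (q - 1) * Λ ^ (1 - q) := by
          simpa only [neg_sub] using floor_half_rpow_le hΛ (s := 1 - q) (by linarith)
        calc 8 * ((N : ℝ) ^ (1 - q) / (q - 1))
            ≤ 8 * (4 ^ (q - 1) * Λ ^ (1 - q) / (q - 1)) := by gcongr
          _ = _ := by ring

lemma tsum_ball_inv_one_add_nsq_le {Λ : ℝ} (hΛ : 1 ≤ Λ) :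
    ∑' s : {s : ℤ × ℤ // 1 + nsq s ≤ Λ ^ 2}, ENNReal.ofReal (1 + nsq s)⁻¹ ≤
      ENNReal.ofReal (32 * (1 + Real.log Λ)) := by
  set B := {s : ℤ × ℤ | 1 + nsq s ≤ Λ ^ 2}
  set F := fun s : ℤ × ℤ => ENNReal.ofReal (1 + nsq s)⁻¹
  set M := ⌊Λ⌋₊
  have inner_vanish : ∀ n ∉ range (M + 1), ∑ r ∈ box n, B.indicator F r = 0 := by
    intro n hn
    refine sum_eq_zero fun r hr => Set.indicator_of_notMem (fun hrB => ?_) _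
    have hΛn : Λ < n := Nat.lt_of_floor_lt (by simpa [Nat.lt_succ_iff] using hn)
    have := sq_le_nsq_of_mem_box hr
    have : Λ ^ 2 < (n : ℝ) ^ 2 := pow_lt_pow_left₀ hΛn (by linarith) two_ne_zero
    simp only [B, Set.mem_ofPred_eq] at hrB
    linarith
  calc ∑' s : B, F s = ∑' s, B.indicator F s := tsum_subtype B F
    _ = ∑' n : ℕ, ∑ r ∈ box n, B.indicator F r := tsum_eq_tsum_sum_box _
    _ = ∑ n ∈ range (M + 1), ∑ r ∈ box n, B.indicator F r := tsum_eq_sum inner_vanish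
    _ ≤ ∑ n ∈ range (M + 1), ENNReal.ofReal (16 * ((n + 1 : ℕ) : ℝ)⁻¹) :=
        sum_le_sum fun n _ => (sum_le_sum fun r _ => Set.indicator_le_self B F r).trans
          (sum_box_ofReal_inv_le n)
    _ = ENNReal.ofReal (16 * harmonic (M + 1)) := by
        rw [← ENNReal.ofReal_sum_of_nonneg (fun _ _ => by positivity), ← mul_sum, harmonic]
        push_cast
        rfl
    _ ≤ ENNReal.ofReal (32 * (1 + Real.log Λ)) := by
        refine ENNReal.ofReal_le_ofReal ?_
        have := harmonic_floor_le_one_add_log Λ hΛ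
        have : ((M + 1 : ℕ) : ℝ)⁻¹ ≤ 1 := inv_le_one_of_one_le₀ (by simp)
        have := Real.log_nonneg hΛ
        rw [harmonic_succ]
        push_cast at *
        linarith

lemma rpow_neg_half_mul_inv_le_of_le_four_mul {x y β : ℝ} (hβ : 0 ≤ β) (hx : 0 < x)
    (hxy : x ≤ 4 * y) : y ^ (-(β / 2)) * x⁻¹ ≤ 2 ^ β * x ^ (-(β / 2 + 1)) := by
  have hy : y ^ (-(β / 2)) ≤ 2 ^ β * x ^ (-(β / 2)) := calc
    y ^ (-(β / 2)) ≤ (x / 4) ^ (-(β / 2)) :=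
      Real.rpow_le_rpow_of_nonpos (by positivity) (by linarith) (by linarith)
    _ = 2 ^ β * x ^ (-(β / 2)) := by
      rw [Real.div_rpow hx.le (by norm_num), div_eq_mul_inv, ← Real.rpow_neg (by norm_num),
        neg_neg, show (4 : ℝ) = 2 ^ (2 : ℝ) by norm_num, ← Real.rpow_mul (by norm_num), mul_comm]
      ring_nf
  calc y ^ (-(β / 2)) * x⁻¹ ≤ 2 ^ β * x ^ (-(β / 2)) * x⁻¹ := by gcongr
    _ = 2 ^ β * x ^ (-(β / 2 + 1)) := by
      rw [neg_add, Real.rpow_add hx, Real.rpow_neg_one, mul_assoc]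

lemma rpow_neg_half_mul_inv_le_of_le_sq_lt {x y β Λ : ℝ} (hβ : β ≤ 2) (hΛ : 0 < Λ) (hy : 0 < y)
    (hyΛ : y ≤ Λ ^ 2) (hΛx : Λ ^ 2 < x) : y ^ (-(β / 2)) * x⁻¹ ≤ Λ ^ (-β) * y⁻¹ := by
  have hy' : y ^ (1 - β / 2) ≤ Λ ^ (2 - β) := calc
    y ^ (1 - β / 2) ≤ (Λ ^ 2) ^ (1 - β / 2) := Real.rpow_le_rpow hy.le hyΛ (by linarith)
    _ = Λ ^ (2 - β) := by
      rw [← Real.rpow_natCast, ← Real.rpow_mul hΛ.le]; push_cast; ring_nf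
  calc y ^ (-(β / 2)) * x⁻¹ = y ^ (1 - β / 2) * y⁻¹ * x⁻¹ := by
        congr 1; rw [← Real.rpow_neg_one, ← Real.rpow_add hy]; ring_nf
    _ ≤ Λ ^ (2 - β) * y⁻¹ * (Λ ^ 2)⁻¹ := by
        have : 0 < x := (by positivity : 0 < Λ ^ 2).trans hΛx
        gcongr
    _ = Λ ^ (-β) * y⁻¹ := by
      rw [sub_eq_add_neg, Real.rpow_add hΛ, Real.rpow_two]; field_simp

lemma ofReal_mixed_term_le {β Λ : ℝ} (hβ0 : 0 ≤ β) (hβ2 : β ≤ 2) (hΛ : 0 < Λ) {p r : ℤ × ℤ}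
    (hp : 1 + nsq p ≤ Λ ^ 2) (hr : Λ ^ 2 < 1 + nsq r) :
    ENNReal.ofReal ((1 + nsq (r - p)) ^ (-(β / 2)) * (1 + nsq r)⁻¹) ≤
      ENNReal.ofReal (2 ^ β * (1 + nsq r) ^ (-(β / 2 + 1))) +
        {s | 1 + nsq s ≤ Λ ^ 2}.indicator
          (fun s => ENNReal.ofReal (Λ ^ (-β) * (1 + nsq s)⁻¹)) (r - p) := by
  have hrp := nsq_nonneg (r - p)
  by_cases hnear : 1 + nsq r ≤ 4 * (1 + nsq (r - p))
  · exact le_add_right <| ENNReal.ofReal_le_ofReal <|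
      rpow_neg_half_mul_inv_le_of_le_four_mul hβ0 (by linarith [nsq_nonneg r]) hnear
  · have hfar : 1 + nsq (r - p) ≤ Λ ^ 2 := by
      have := nsq_add_le (r - p) p
      rw [sub_add_cancel] at this
      linarith
    rw [Set.indicator_of_mem (show r - p ∈ {s : ℤ × ℤ | 1 + nsq s ≤ Λ ^ 2} from hfar)]
    exact le_add_left <| ENNReal.ofReal_le_ofReal <|
      rpow_neg_half_mul_inv_le_of_le_sq_lt hβ2 hΛ (by linarith) hfar hr

lemma tsum_mixed_le_tail_add_ball {β Λ : ℝ} (hβ0 : 0 ≤ β) (hβ2 : β ≤ 2) (hΛ : 0 < Λ)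
    {p : ℤ × ℤ} (hp : 1 + nsq p ≤ Λ ^ 2) :
    ∑' r : {r : ℤ × ℤ // Λ ^ 2 < 1 + nsq r},
        ENNReal.ofReal ((1 + nsq (r.1 - p)) ^ (-(β / 2)) * (1 + nsq r.1)⁻¹) ≤
      ENNReal.ofReal (2 ^ β) *
          ∑' r : {r : ℤ × ℤ // Λ ^ 2 < 1 + nsq r}, ENNReal.ofReal ((1 + nsq r) ^ (-(β / 2 + 1))) +
        ENNReal.ofReal (Λ ^ (-β)) *
          ∑' s : {s : ℤ × ℤ // 1 + nsq s ≤ Λ ^ 2}, ENNReal.ofReal (1 + nsq s)⁻¹ := by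
  set B := {s : ℤ × ℤ | 1 + nsq s ≤ Λ ^ 2}
  set G := fun s : ℤ × ℤ => ENNReal.ofReal (Λ ^ (-β) * (1 + nsq s)⁻¹)
  have hshift : ∑' r : {r : ℤ × ℤ // Λ ^ 2 < 1 + nsq r}, B.indicator G (r.1 - p) ≤
      ∑' s : B, G s :=
    (ENNReal.tsum_comp_le_tsum_of_injective (fun a b h => Subtype.ext (sub_left_injective h))
      _).trans_eq (tsum_subtype B G).symm
  calc _ ≤ ∑' r : {r : ℤ × ℤ // Λ ^ 2 < 1 + nsq r},
        (ENNReal.ofReal (2 ^ β * (1 + nsq r.1) ^ (-(β / 2 + 1))) + B.indicator G (r.1 - p)) :=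
        ENNReal.tsum_le_tsum fun r => ofReal_mixed_term_le hβ0 hβ2 hΛ hp r.2
    _ ≤ _ := by
      rw [ENNReal.tsum_add]
      refine add_le_add (le_of_eq ?_) (hshift.trans_eq ?_)
      · simp_rw [ENNReal.ofReal_mul (by positivity : (0 : ℝ) ≤ 2 ^ β), ENNReal.tsum_mul_left]
      · simp_rw [G, ENNReal.ofReal_mul (by positivity : (0 : ℝ) ≤ Λ ^ (-β)),
          ENNReal.tsum_mul_left]
        rfl

/-- Mixed low/high tail sum: for `3/2 < β ≤ 2`, `Λ ≥ 2` and `p` with `1+|p|² ≤ Λ²`,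
`∑_{h(r) > Λ²} (1+|r-p|²)^{-β/2} (1+|r|²)^{-1} ≤ C (1+log Λ) Λ^{-β}`. -/
theorem bessel_mixed_tail_sum (β : ℝ) (hβ1 : 3 / 2 < β) (hβ2 : β ≤ 2) :
    ∃ C : ℝ, 0 < C ∧ ∀ Λ : ℝ, 2 ≤ Λ → ∀ p : ℤ × ℤ, 1 + nsq p ≤ Λ ^ 2 →
      ∑' r : {r : ℤ × ℤ // Λ ^ 2 < 1 + nsq r},
        ENNReal.ofReal ((1 + nsq (r.1 - p)) ^ (-(β / 2)) * (1 + nsq r.1)⁻¹) ≤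
      ENNReal.ofReal (C * (1 + Real.log Λ) * Λ ^ (-β)) := by
  obtain ⟨C, hC, htail⟩ := exists_tsum_tail_rpow_le (γ := β / 2 + 1) (by linarith)
  refine ⟨2 ^ β * C + 32, by positivity, fun Λ hΛ p hp => ?_⟩
  have hΛ0 : 0 < Λ := by linarith
  have hlog := Real.log_nonneg (show (1 : ℝ) ≤ Λ by linarith)
  calc _ ≤ _ := tsum_mixed_le_tail_add_ball (by linarith) hβ2 hΛ0 hp
    _ ≤ ENNReal.ofReal (2 ^ β) * ENNReal.ofReal (C * Λ ^ (2 - 2 * (β / 2 + 1))) +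
        ENNReal.ofReal (Λ ^ (-β)) * ENNReal.ofReal (32 * (1 + Real.log Λ)) := by
      gcongr
      exacts [htail Λ hΛ, tsum_ball_inv_one_add_nsq_le (by linarith)]
    _ ≤ ENNReal.ofReal ((2 ^ β * C + 32) * (1 + Real.log Λ) * Λ ^ (-β)) := by
      rw [← ENNReal.ofReal_mul (by positivity), ← ENNReal.ofReal_mul (by positivity),
        ← ENNReal.ofReal_add (by positivity) (by positivity),
        show 2 - 2 * (β / 2 + 1) = -β by ring]
      refine ENNReal.ofReal_le_ofReal ?_
      have : 0 ≤ 2 ^ β * C * Λ ^ (-β) := by positivity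
      nlinarith
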